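/- arXiv:1708.07179 — 4 statements merged into one kernel-verified Lean document; each statement's English description precedes it below -/
import Mathlib

section
/- If H is a retract of a reflexive graph G, then the ℓ-visibility cop number of H is at most the ℓ-visibility cop number of G, i.e., c_ℓ(H) ≤ c_ℓ(G). -/
namespace CopsRobber

open Classical

noncomputable section

variable {V : Type*}

/-- Observation available to the cops: the robber's position is revealed iff some cop
is within graph distance `ℓ` of the robber. -/
def obs (G : SimpleGraph V) (ℓ : ℕ∞) {k : ℕ} (p : Fin k → V) (r : V) : Option V :=
  if ∃ i, (G.dist (p i) r : ℕ∞) ≤ ℓ then some r else none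

/-- A strategy for `k` cops on `G`: initial positions, and a move function depending on the
history of observations and the current cop positions.  Each cop moves along an edge or
passes. -/
structure CopStrategy (G : SimpleGraph V) (k : ℕ) where
  init : Fin k → V
  move : List (Option V) → (Fin k → V) → Fin k → V
  valid : ∀ h p i, move h p i = p i ∨ G.Adj (p i) (move h p i)

/-- A robber trajectory: in each round the robber moves along an edge or passes. -/
def RobberWalk (G : SimpleGraph V) (R : ℕ → V) : Prop :=
  ∀ t, R (t + 1) = R t ∨ G.Adj (R t) (R (t + 1))

/-- The play of the game: cop positions and observation history at the end of each round.
In round `t+1` the cops move first (observing the robber at his position of round `t` if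
within range), then the robber moves (and is observed at his new position if within range). -/
def play (G : SimpleGraph V) (ℓ : ℕ∞) {k : ℕ} (σ : CopStrategy G k) (R : ℕ → V) :
    ℕ → (Fin k → V) × List (Option V)
  | 0 => (σ.init, [obs G ℓ σ.init (R 0)])
  | t + 1 =>
    let s := play G ℓ σ R t
    let p := σ.move s.2 s.1
    (p, (s.2 ++ [obs G ℓ p (R t)]) ++ [obs G ℓ p (R (t + 1))])

/-- Positions of the cops at the end of round `t`. -/
def copsAt (G : SimpleGraph V) (ℓ : ℕ∞) {k : ℕ} (σ : CopStrategy G k) (R : ℕ → V)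
    (t : ℕ) : Fin k → V :=
  (play G ℓ σ R t).1

/-- The cops capture the robber: some cop occupies the robber's vertex, either
simultaneously or by moving onto it mid-round. -/
def Captures (G : SimpleGraph V) (ℓ : ℕ∞) {k : ℕ} (σ : CopStrategy G k) (R : ℕ → V) : Prop :=
  ∃ t i, copsAt G ℓ σ R t i = R t ∨ copsAt G ℓ σ R (t + 1) i = R t

/-- The cops see the robber: some cop comes within distance `ℓ` of the robber. -/
def Sees (G : SimpleGraph V) (ℓ : ℕ∞) {k : ℕ} (σ : CopStrategy G k) (R : ℕ → V) : Prop :=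
  ∃ t i, (G.dist (copsAt G ℓ σ R t i) (R t) : ℕ∞) ≤ ℓ ∨
    (G.dist (copsAt G ℓ σ R (t + 1) i) (R t) : ℕ∞) ≤ ℓ

/-- `c_ℓ(G)`: the minimum number of cops that guarantee capture of the robber in the
`ℓ`-visibility Cops and Robber game. -/
def visCopNumber (G : SimpleGraph V) (ℓ : ℕ∞) : ℕ :=
  sInf {k | ∃ σ : CopStrategy G k, ∀ R, RobberWalk G R → Captures G ℓ σ R}

/-- `c'_ℓ(G)`: the minimum number of cops that guarantee seeing the robber in the
`ℓ`-visibility Cops and Robber game. -/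
def visSeeNumber (G : SimpleGraph V) (ℓ : ℕ∞) : ℕ :=
  sInf {k | ∃ σ : CopStrategy G k, ∀ R, RobberWalk G R → Sees G ℓ σ R}

/-- The classical cop number: the game with full visibility. -/
def copNumber (G : SimpleGraph V) : ℕ := visCopNumber G ⊤

end
end CopsRobber


/-!
The cops on `H` shadow a winning strategy on `G` against the robber's image `ι ∘ r` under the
inclusion: they stand on the `f`-images of the simulated cops.  A cop that sees the shadow robber on
`G` is, after applying `f`, at least as close to the real robber on `H`, so every observation the
simulation needs can be recovered from the observations on `H`; and when a simulated cop reaches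
`ι (r t)`, its image reaches `f (ι (r t)) = r t`.
-/

namespace CopsRobber

open Classical

noncomputable section

variable {V W : Type*}

/-- `f` is a homomorphism of the reflexive graphs obtained by adding a loop at every vertex. -/
def IsReflHom (G : SimpleGraph V) (H : SimpleGraph W) (f : V → W) : Prop :=
  ∀ a b, G.Adj a b → f a = f b ∨ H.Adj (f a) (f b)

section Distance

variable {G : SimpleGraph V} {H : SimpleGraph W} {f : V → W}

theorem IsReflHom.exists_walk_length_le (hf : IsReflHom G H f) {a b : V} (w : G.Walk a b) :
    ∃ w' : H.Walk (f a) (f b), w'.length ≤ w.length := by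
  induction w with
  | nil => exact ⟨.nil, le_rfl⟩
  | cons hadj _ ih =>
    obtain ⟨w', hw'⟩ := ih
    rcases hf _ _ hadj with heq | hadj'
    · exact ⟨w'.copy heq.symm rfl, by simpa using hw'.trans (Nat.le_succ _)⟩
    · exact ⟨.cons hadj' w', by simpa using hw'⟩

theorem IsReflHom.dist_le (hf : IsReflHom G H f) {a b : V} (hab : G.Reachable a b) :
    H.dist (f a) (f b) ≤ G.dist a b := by
  obtain ⟨w, hw⟩ := hab.exists_walk_length_eq_dist
  obtain ⟨w', hw'⟩ := hf.exists_walk_length_le w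
  exact (SimpleGraph.dist_le w').trans (hw'.trans hw.le)

end Distance

theorem RobberWalk.map {G : SimpleGraph V} {H : SimpleGraph W} {ι : W → V}
    (hι : ∀ a b, H.Adj a b → G.Adj (ι a) (ι b)) {r : ℕ → W} (hr : RobberWalk H r) :
    RobberWalk G (ι ∘ r) :=
  fun t => (hr t).imp (congrArg ι) (hι _ _)

theorem length_play_snd (G : SimpleGraph V) (ℓ : ℕ∞) {k : ℕ} (σ : CopStrategy G k)
    (R : ℕ → V) (t : ℕ) : (play G ℓ σ R t).2.length = 2 * t + 1 := by
  induction t with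
  | zero => rfl
  | succ t ih => simp only [play, List.length_append, ih, List.length_singleton]; ring

theorem exists_strategy_visCopNumber [Finite V] (G : SimpleGraph V) (ℓ : ℕ∞) :
    ∃ σ : CopStrategy G (visCopNumber G ℓ), ∀ R, RobberWalk G R → Captures G ℓ σ R := by
  have := Fintype.ofFinite V
  -- one cop on every vertex captures at once
  have hwin : {k | ∃ σ : CopStrategy G k, ∀ R, RobberWalk G R → Captures G ℓ σ R}.Nonempty :=
    ⟨Fintype.card V, ⟨(Fintype.equivFin V).symm, fun _ p => p, fun _ _ _ => Or.inl rfl⟩,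
      fun R _ => ⟨0, Fintype.equivFin V (R 0), Or.inl (by simp [copsAt, play])⟩⟩
  exact Nat.sInf_mem hwin

theorem visCopNumber_le {G : SimpleGraph V} {ℓ : ℕ∞} {k : ℕ} (σ : CopStrategy G k)
    (hσ : ∀ R, RobberWalk G R → Captures G ℓ σ R) : visCopNumber G ℓ ≤ k :=
  Nat.sInf_le ⟨σ, hσ⟩

section Simulation

variable (G : SimpleGraph V) (H : SimpleGraph W) (ι : W → V) (f : V → W) (ℓ : ℕ∞) {k : ℕ}
  (σ : CopStrategy G k)

/-- Process one observation made on `H`: record the corresponding observation on `G`, and after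
each odd-length history let the simulated cops make their next move.  The state is the simulated
history on `G` together with the cop positions at which the next observation is made. -/
def simStep (s : List (Option V) × (Fin k → V)) (o : Option W) :
    List (Option V) × (Fin k → V) :=
  let g := s.1 ++ [o.bind (obs G ℓ s.2 ∘ ι)]
  (g, if Odd g.length then σ.move g s.2 else s.2)

def simulate (h : List (Option W)) : List (Option V) × (Fin k → V) :=
  h.foldl (simStep G ι ℓ σ) ([], σ.init)

/-- Each cop heads for the `f`-image of its simulated counterpart; the fallback `q i` only serves
histories that do not arise in a play. -/
def liftStrategy : CopStrategy H k where
  init := f ∘ σ.init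
  move h q i :=
    let target := f ((simulate G ι ℓ σ h).2 i)
    if target = q i ∨ H.Adj (q i) target then target else q i
  valid h q i := by
    dsimp only
    split_ifs with hc
    · exact hc
    · exact Or.inl rfl

variable {G H ι f ℓ σ}

theorem liftStrategy_move (hf : IsReflHom G H f) {h : List (Option W)} {g : List (Option V)}
    {p p' : Fin k → V} (hsim : simulate G ι ℓ σ h = (g, p'))
    (hp' : ∀ i, p' i = p i ∨ G.Adj (p i) (p' i)) :
    (liftStrategy G H ι f ℓ σ).move h (f ∘ p) = f ∘ p' := by
  funext i
  have hreach : f (p' i) = f (p i) ∨ H.Adj (f (p i)) (f (p' i)) := by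
    rcases hp' i with heq | hadj
    · exact Or.inl (congrArg f heq)
    · exact (hf _ _ hadj).imp Eq.symm id
  simp only [liftStrategy, hsim, Function.comp_apply, if_pos hreach]

/-- Only observations within range on `H` can be within range on `G`, since `f` does not increase
distances and fixes the robber's position. -/
theorem bind_obs_comp (hG : G.Preconnected) (hf : IsReflHom G H f) (hretr : ∀ w, f (ι w) = w)
    (p : Fin k → V) (r : W) :
    (obs H ℓ (f ∘ p) r).bind (obs G ℓ p ∘ ι) = obs G ℓ p (ι r) := by
  by_cases hH : ∃ i, (H.dist (f (p i)) r : ℕ∞) ≤ ℓ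
  · simp only [obs, Function.comp_apply, if_pos hH, Option.bind_some]
  · simp only [obs, Function.comp_apply, if_neg hH, Option.bind_none]
    rw [if_neg]
    rintro ⟨i, hi⟩
    refine hH ⟨i, le_trans ?_ hi⟩
    have hdist := hf.dist_le (hG (p i) (ι r))
    rw [hretr r] at hdist
    exact_mod_cast hdist

theorem simStep_obs (hG : G.Preconnected) (hf : IsReflHom G H f) (hretr : ∀ w, f (ι w) = w)
    (g : List (Option V)) (p : Fin k → V) (r : W) :
    simStep G ι ℓ σ (g, p) (obs H ℓ (f ∘ p) r) =
      (g ++ [obs G ℓ p (ι r)],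
        if Odd (g.length + 1) then σ.move (g ++ [obs G ℓ p (ι r)]) p else p) := by
  rw [simStep, bind_obs_comp hG hf hretr, List.length_append, List.length_singleton]

theorem play_liftStrategy (hG : G.Preconnected) (hf : IsReflHom G H f)
    (hretr : ∀ w, f (ι w) = w) (r : ℕ → W) (t : ℕ) :
    copsAt H ℓ (liftStrategy G H ι f ℓ σ) r t = f ∘ copsAt G ℓ σ (ι ∘ r) t ∧
      simulate G ι ℓ σ (play H ℓ (liftStrategy G H ι f ℓ σ) r t).2 =
        ((play G ℓ σ (ι ∘ r) t).2, copsAt G ℓ σ (ι ∘ r) (t + 1)) := by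
  induction t with
  | zero =>
    refine ⟨rfl, ?_⟩
    change List.foldl _ _ [obs H ℓ (f ∘ σ.init) (r 0)] = _
    rw [List.foldl_cons, List.foldl_nil, simStep_obs hG hf hretr, List.length_nil, zero_add,
      if_pos odd_one]
    rfl
  | succ t ih =>
    obtain ⟨hcops, hsim⟩ := ih
    unfold copsAt at hcops hsim ⊢
    set p := (play G ℓ σ (ι ∘ r) (t + 1)).1
    have hmove : (liftStrategy G H ι f ℓ σ).move (play H ℓ (liftStrategy G H ι f ℓ σ) r t).2
        (play H ℓ (liftStrategy G H ι f ℓ σ) r t).1 = f ∘ p := by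
      rw [hcops]
      exact liftStrategy_move hf hsim (σ.valid _ _)
    refine ⟨hmove, ?_⟩
    have hlen := length_play_snd G ℓ σ (ι ∘ r) t
    have hodd : ¬Odd ((play G ℓ σ (ι ∘ r) t).2.length + 1) := by
      rw [hlen, Nat.not_odd_iff_even]; exact ⟨t + 1, by ring⟩
    have heven : Odd (((play G ℓ σ (ι ∘ r) t).2 ++ [obs G ℓ p (ι (r t))]).length + 1) := by
      rw [List.length_append, hlen, List.length_singleton]; exact ⟨t + 1, by ring⟩
    change List.foldl _ _ (_ ++ [obs H ℓ _ (r t)] ++ [obs H ℓ _ (r (t + 1))]) = _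
    rw [hmove, List.foldl_append, List.foldl_append]
    change List.foldl _ (List.foldl _ (simulate G ι ℓ σ _) _) _ = _
    simp only [hsim, List.foldl_cons, List.foldl_nil]
    rw [simStep_obs hG hf hretr, if_neg hodd, simStep_obs hG hf hretr, if_pos heven]
    rfl

theorem captures_liftStrategy (hG : G.Preconnected) (hf : IsReflHom G H f)
    (hretr : ∀ w, f (ι w) = w) {r : ℕ → W} (hcap : Captures G ℓ σ (ι ∘ r)) :
    Captures H ℓ (liftStrategy G H ι f ℓ σ) r := by
  have hcops t := (play_liftStrategy (ℓ := ℓ) (σ := σ) hG hf hretr r t).1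
  obtain ⟨t, i, hcap⟩ := hcap
  refine ⟨t, i, ?_⟩
  simp only [hcops, Function.comp_apply]
  rcases hcap with h | h
  · exact Or.inl (by rw [h, Function.comp_apply, hretr])
  · exact Or.inr (by rw [h, Function.comp_apply, hretr])

end Simulation

end

end CopsRobber

open CopsRobber in
theorem retract_visCopNumber_le_general {V W : Type*} [Fintype V]
    (G : SimpleGraph V) (H : SimpleGraph W) (hG : G.Connected)
    (ι : W → V)
    (hsub : ∀ a b : W, H.Adj a b → G.Adj (ι a) (ι b))
    (f : V → W) (hhom : ∀ a b : V, G.Adj a b → f a = f b ∨ H.Adj (f a) (f b))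
    (hretr : ∀ w : W, f (ι w) = w) (ℓ : ℕ) :
    visCopNumber H (ℓ : ℕ∞) ≤ visCopNumber G (ℓ : ℕ∞) := by
  obtain ⟨σ, hσ⟩ := exists_strategy_visCopNumber G (ℓ : ℕ∞)
  exact visCopNumber_le (liftStrategy G H ι f ℓ σ) fun r hr =>
    captures_liftStrategy hG.preconnected hhom hretr (hσ _ (hr.map hsub))

open CopsRobber in
/-- If `H` is a retract of a (reflexive) graph `G`, then
`c_ℓ(H) ≤ c_ℓ(G)`. -/
theorem retract_visCopNumber_le {V W : Type*} [Fintype V] [Fintype W]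
    (G : SimpleGraph V) (H : SimpleGraph W) (hG : G.Connected)
    (ι : W → V) (hinj : Function.Injective ι)
    (hsub : ∀ a b : W, H.Adj a b → G.Adj (ι a) (ι b))
    (f : V → W) (hhom : ∀ a b : V, G.Adj a b → f a = f b ∨ H.Adj (f a) (f b))
    (hretr : ∀ w : W, f (ι w) = w) (ℓ : ℕ) :
    visCopNumber H (ℓ : ℕ∞) ≤ visCopNumber G (ℓ : ℕ∞) :=
  retract_visCopNumber_le_general G H hG ι hsub f hhom hretr ℓ
end

section
/- If T is an isometric subtree of a connected graph G (i.e., distances in T equal distances in G for all pairs of vertices of T), then c_ℓ(T) ≤ c_ℓ(G). -/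
namespace SimpleGraph

variable {V W κ : Type*} {G : SimpleGraph V} {T : SimpleGraph W}

lemma Walk.dist_le_length_of_mem_support {u v x : V} (p : G.Walk u v) (hx : x ∈ p.support) :
    G.dist u x ≤ p.length := by
  classical
  exact (dist_le _).trans (p.length_takeUntil_le_length hx)

lemma Connected.exists_adj_dist_add_one_eq (hG : G.Connected) {c x : V} (h : G.dist c x ≠ 0) :
    ∃ y, G.Adj x y ∧ G.dist c y + 1 = G.dist c x := by
  obtain ⟨p, hp⟩ := hG.exists_walk_length_eq_dist x c
  cases p with
  | nil => simp at h
  | @cons _ y _ hxy q =>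
    have hq : G.dist c y ≤ q.length := dist_comm (u := y) ▸ dist_le q
    have hc : G.dist c x ≤ G.dist c y + G.dist y x := hG.dist_triangle
    rw [dist_comm (u := y), dist_eq_one_iff_adj.mpr hxy] at hc
    rw [Walk.length_cons, dist_comm] at hp
    exact ⟨y, hxy, by omega⟩

lemma IsTree.length_eq_dist_of_isPath (hT : T.IsTree) {a b : W} {p : T.Walk a b}
    (hp : p.IsPath) : p.length = T.dist a b := by
  obtain ⟨q, hq, hql⟩ := hT.connected.exists_path_of_dist a b
  rw [← hql, Subtype.mk.inj <| (hT.isAcyclic.subsingleton_path a b).elim ⟨p, hp⟩ ⟨q, hq⟩]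

/-- `a` lies on the `y`-side of the edge `xy` and `b` on its `x`-side, so the geodesic from `a` to
`b` runs through `x`. -/
theorem IsTree.dist_eq_add_of_adj (hT : T.IsTree) {x y a b : W} (hxy : T.Adj x y)
    (ha : T.dist a y + 1 = T.dist a x) (hb : T.dist b x + 1 = T.dist b y) :
    T.dist a b = T.dist a x + T.dist b x := by
  classical
  obtain ⟨p, hp, hpl⟩ := hT.connected.exists_path_of_dist a y
  obtain ⟨q, hq, hql⟩ := hT.connected.exists_path_of_dist b x
  have hxp : x ∉ p.support := fun hx => by
    have := p.dist_le_length_of_mem_support hx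
    omega
  have hyq : y ∉ q.support := fun hy => by
    have := q.dist_le_length_of_mem_support hy
    omega
  have hdisj : ∀ z ∈ p.support, z ∉ q.support := fun z hzp hzq =>
    hxp <| p.support_dropUntil_subset_support hzp <|
      hT.isAcyclic.mem_support_of_ne_mem_support_of_adj_of_isPath (hp.dropUntil hzp)
        (hq.dropUntil hzq) hxy.symm fun hy => hyq (q.support_dropUntil_subset_support hzq hy)
  have hpath : (p.append (.cons hxy.symm q.reverse)).IsPath := by
    rw [Walk.isPath_def, Walk.support_append, Walk.support_cons, List.tail_cons,
      Walk.support_reverse, List.nodup_append]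
    refine ⟨hp.support_nodup, List.nodup_reverse.mpr hq.support_nodup, ?_⟩
    rintro z hzp _ hzq rfl
    exact hdisj z hzp (List.mem_reverse.mp hzq)
  have := hT.length_eq_dist_of_isPath hpath
  simp only [Walk.length_append, Walk.length_cons, Walk.length_reverse] at this
  omega

/-- How far `x` is from lying in all the balls `B(c i, r i)`, `i ∈ s`; it vanishes exactly on
their intersection because `ℕ`-subtraction truncates. -/
noncomputable def ballExcess (T : SimpleGraph W) (s : Finset κ) (c : κ → W) (r : κ → ℕ) (x : W) :
    ℕ :=
  s.sup fun i => T.dist (c i) x - r i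

/-- Stepping from `x` towards a centre of maximal excess decreases the excess. -/
theorem IsTree.exists_ballExcess_lt (hT : T.IsTree) {s : Finset κ} {c : κ → W} {r : κ → ℕ}
    (h : ∀ i ∈ s, ∀ j ∈ s, T.dist (c i) (c j) ≤ r i + r j) {x : W}
    (hx : ballExcess T s c r x ≠ 0) : ∃ y, ballExcess T s c r y < ballExcess T s c r x := by
  have hs : s.Nonempty := Finset.nonempty_iff_ne_empty.mpr fun h => hx (by simp [ballExcess, h])
  obtain ⟨i, hi, hix⟩ := Finset.exists_mem_eq_sup s hs fun i => T.dist (c i) x - r i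
  rw [← ballExcess] at hix
  obtain ⟨y, hxy, hy⟩ := hT.connected.exists_adj_dist_add_one_eq (c := c i) (x := x) (by omega)
  refine ⟨y, lt_of_le_of_lt (b := ballExcess T s c r x - 1) (Finset.sup_le fun j hj => ?_)
    (by omega)⟩
  have hjx : T.dist (c j) x - r j ≤ ballExcess T s c r x :=
    Finset.le_sup (f := fun j => T.dist (c j) x - r j) hj
  rcases hT.dist_eq_dist_add_one_of_adj (c j) hxy with hj' | hj'
  · omega
  · have := hT.dist_eq_add_of_adj hxy hy hj'.symm
    have := h i hi j hj
    omega

/-- Helly property of balls in a tree. -/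
theorem IsTree.exists_forall_dist_le (hT : T.IsTree) (s : Finset κ) (c : κ → W) (r : κ → ℕ)
    (h : ∀ i ∈ s, ∀ j ∈ s, T.dist (c i) (c j) ≤ r i + r j) :
    ∃ x, ∀ i ∈ s, T.dist (c i) x ≤ r i := by
  have := hT.connected.nonempty
  set x := Function.argmin (ballExcess T s c r)
  have hx : ballExcess T s c r x = 0 := by
    by_contra hx
    obtain ⟨y, hy⟩ := hT.exists_ballExcess_lt h hx
    exact absurd hy (not_lt.mpr (Function.argmin_le _ y))
  exact ⟨x, fun i hi => Nat.sub_eq_zero_iff_le.mp ((Finset.sup_eq_bot_iff _ s).mp hx i hi)⟩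

theorem IsTree.exists_dist_le_of_dist_le_on (hT : T.IsTree) (hG : G.Connected) {S : Finset V}
    {f : V → W} (hf : ∀ x ∈ S, ∀ y ∈ S, T.dist (f x) (f y) ≤ G.dist x y) (v : V) :
    ∃ w, ∀ y ∈ S, T.dist (f y) w ≤ G.dist y v :=
  hT.exists_forall_dist_le S f (G.dist · v) fun x hx y hy =>
    (hf x hx y hy).trans <| hG.dist_triangle.trans_eq <| congrArg _ G.dist_comm

lemma dist_update_le_of_dist_le_on [DecidableEq V] {S : Finset V} {f : V → W}
    (hf : ∀ x ∈ S, ∀ y ∈ S, T.dist (f x) (f y) ≤ G.dist x y) {v : V} (hv : v ∉ S) {w : W}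
    (hw : ∀ y ∈ S, T.dist (f y) w ≤ G.dist y v) :
    ∀ x ∈ insert v S, ∀ y ∈ insert v S,
      T.dist (Function.update f v w x) (Function.update f v w y) ≤ G.dist x y := by
  have hne : ∀ x ∈ S, x ≠ v := fun x hx hxv => hv (hxv ▸ hx)
  simp only [Finset.forall_mem_insert, Function.update_self, dist_self, le_refl, true_and]
  refine ⟨fun y hy => ?_, fun x hx => ⟨?_, fun y hy => ?_⟩⟩
  · rw [Function.update_of_ne (hne y hy), dist_comm, G.dist_comm]
    exact hw y hy
  · rw [Function.update_of_ne (hne x hx)]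
    exact hw x hx
  · rw [Function.update_of_ne (hne x hx), Function.update_of_ne (hne y hy)]
    exact hf x hx y hy

theorem IsTree.exists_extension_dist_le [Fintype V] (hT : T.IsTree) (hG : G.Connected)
    {S : Finset V} {f : V → W} (hf : ∀ x ∈ S, ∀ y ∈ S, T.dist (f x) (f y) ≤ G.dist x y) :
    ∃ g : V → W, (∀ x ∈ S, g x = f x) ∧ ∀ x y, T.dist (g x) (g y) ≤ G.dist x y := by
  classical
  suffices ∀ A : Finset V, ∃ g : V → W, (∀ x ∈ S, g x = f x) ∧
      ∀ x ∈ A ∪ S, ∀ y ∈ A ∪ S, T.dist (g x) (g y) ≤ G.dist x y by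
    obtain ⟨g, hgS, hg⟩ := this Finset.univ
    exact ⟨g, hgS, fun x y => hg x (by simp) y (by simp)⟩
  intro A
  induction A using Finset.induction_on with
  | empty => exact ⟨f, fun _ _ => rfl, by simpa using hf⟩
  | insert v A _ ih =>
    obtain ⟨g, hgS, hg⟩ := ih
    rw [Finset.insert_union]
    by_cases hv : v ∈ A ∪ S
    · rw [Finset.insert_eq_of_mem hv]
      exact ⟨g, hgS, hg⟩
    obtain ⟨w, hw⟩ := hT.exists_dist_le_of_dist_le_on hG hg v
    refine ⟨Function.update g v w, fun x hx => ?_, dist_update_le_of_dist_le_on hg hv hw⟩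
    rw [Function.update_of_ne (by rintro rfl; exact hv (Finset.mem_union_right A hx)), hgS x hx]

theorem IsTree.exists_retraction [Fintype V] (hT : T.IsTree) (hG : G.Connected) {ι : W → V}
    (hinj : Function.Injective ι) (hiso : ∀ a b, T.dist a b = G.dist (ι a) (ι b)) :
    ∃ ρ : V → W, (∀ w, ρ (ι w) = w) ∧ ∀ x y, T.dist (ρ x) (ρ y) ≤ G.dist x y := by
  classical
  have := hT.connected.nonempty
  have hinv : ∀ w, Function.invFun ι (ι w) = w := Function.leftInverse_invFun hinj
  obtain ⟨ρ, hρι, hρ⟩ := hT.exists_extension_dist_le hG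
    (S := Finset.univ.filter (· ∈ Set.range ι)) (f := Function.invFun ι) <| by
      simp only [Finset.mem_filter, Finset.mem_univ, true_and, Set.forall_mem_range, hinv]
      exact fun a b => (hiso a b).le
  exact ⟨ρ, fun w => (hρι _ (by simp)).trans (hinv w), hρ⟩

lemma Connected.eq_or_adj_of_dist_le {ρ : V → W} (hT : T.Connected)
    (hρ : ∀ x y, T.dist (ρ x) (ρ y) ≤ G.dist x y)
    {x y : V} (h : y = x ∨ G.Adj x y) : ρ y = ρ x ∨ T.Adj (ρ x) (ρ y) := by
  obtain rfl | hxy := h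
  · exact Or.inl rfl
  have := hρ x y
  rw [dist_eq_one_iff_adj.mpr hxy] at this
  interval_cases h : T.dist (ρ x) (ρ y)
  · exact Or.inl (hT.dist_eq_zero_iff.mp h).symm
  · exact Or.inr (dist_eq_one_iff_adj.mp h)

end SimpleGraph

namespace CopsRobber

open SimpleGraph

variable {V W : Type*} {G : SimpleGraph V} {T : SimpleGraph W} {ι : W → V} {ρ : V → W}
  {ℓ : ℕ∞} {k : ℕ}

/-- The observation of cops at `p` on `G`, recovered from an observation of a robber confined to
the image of `ι`. -/
noncomputable def liftObs (G : SimpleGraph V) (ι : W → V) (ℓ : ℕ∞) (o : Option W) (p : Fin k → V) :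
    Option V :=
  o.bind fun r => obs G ℓ p (ι r)

/-- Cops at `ρ ∘ p` on `T` see the robber whenever cops at `p` on `G` see his image, since `ρ`
does not increase distances. -/
lemma liftObs_obs (hρι : ∀ w, ρ (ι w) = w) (hρ : ∀ x y, T.dist (ρ x) (ρ y) ≤ G.dist x y)
    (p : Fin k → V) (r : W) : liftObs G ι ℓ (obs T ℓ (ρ ∘ p) r) p = obs G ℓ p (ι r) := by
  unfold obs
  by_cases hT : ∃ i, (T.dist ((ρ ∘ p) i) r : ℕ∞) ≤ ℓ
  · rw [if_pos hT]
    rfl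
  · rw [if_neg hT, if_neg]
    · rfl
    rintro ⟨i, hi⟩
    refine hT ⟨i, le_trans ?_ hi⟩
    exact_mod_cast hρι r ▸ hρ (p i) (ι r)

/-- The play on `G` reconstructed from the history of a play on `T`, given in reverse order so
that the last round sits at the head of the list. -/
noncomputable def replay (G : SimpleGraph V) (ι : W → V) (ℓ : ℕ∞) (σ : CopStrategy G k) :
    List (Option W) → (Fin k → V) × List (Option V)
  | [o] => (σ.init, [liftObs G ι ℓ o σ.init])
  | o₂ :: o₁ :: h =>
    let s := replay G ι ℓ σ h
    let p := σ.move s.2 s.1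
    (p, s.2 ++ [liftObs G ι ℓ o₁ p] ++ [liftObs G ι ℓ o₂ p])
  | [] => (σ.init, [])

open Classical in
/-- The cops on `T` follow the `ρ`-images of the cops on `G` in the reconstructed play; the guard
keeps the moves legal off the actual play. -/
noncomputable def retractStrategy (G : SimpleGraph V) (T : SimpleGraph W) (ι : W → V)
    (ρ : V → W) (ℓ : ℕ∞) (σ : CopStrategy G k) : CopStrategy T k where
  init := ρ ∘ σ.init
  move h p i :=
    let q := ρ (σ.move (replay G ι ℓ σ h.reverse).2 (replay G ι ℓ σ h.reverse).1 i)
    if T.Adj (p i) q then q else p i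
  valid h p i := by
    dsimp only
    split_ifs with hadj
    exacts [Or.inr hadj, Or.inl rfl]

lemma retractStrategy_move (hT : T.Connected) (hρ : ∀ x y, T.dist (ρ x) (ρ y) ≤ G.dist x y)
    (σ : CopStrategy G k) (h : List (Option W)) :
    (retractStrategy G T ι ρ ℓ σ).move h (ρ ∘ (replay G ι ℓ σ h.reverse).1)
      = ρ ∘ σ.move (replay G ι ℓ σ h.reverse).2 (replay G ι ℓ σ h.reverse).1 := by
  classical
  funext i
  show (if T.Adj _ _ then _ else _) = _
  rcases hT.eq_or_adj_of_dist_le hρ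
    (σ.valid (replay G ι ℓ σ h.reverse).2 (replay G ι ℓ σ h.reverse).1 i) with heq | hadj
  · simp only [Function.comp_apply, heq, ite_self]
  · exact if_pos hadj

lemma play_retractStrategy (hT : T.Connected) (hρι : ∀ w, ρ (ι w) = w)
    (hρ : ∀ x y, T.dist (ρ x) (ρ y) ≤ G.dist x y) (σ : CopStrategy G k) (R : ℕ → W) (t : ℕ) :
    replay G ι ℓ σ (play T ℓ (retractStrategy G T ι ρ ℓ σ) R t).2.reverse
        = play G ℓ σ (ι ∘ R) t ∧
      copsAt T ℓ (retractStrategy G T ι ρ ℓ σ) R t = ρ ∘ copsAt G ℓ σ (ι ∘ R) t := by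
  induction t with
  | zero => exact ⟨Prod.ext rfl (congrArg ([·]) (liftObs_obs hρι hρ σ.init (R 0))), rfl⟩
  | succ t ih =>
    obtain ⟨ih_replay, ih_cops⟩ := ih
    unfold copsAt at ih_cops ⊢
    have hmove : (retractStrategy G T ι ρ ℓ σ).move (play T ℓ (retractStrategy G T ι ρ ℓ σ) R t).2
        (play T ℓ (retractStrategy G T ι ρ ℓ σ) R t).1
          = ρ ∘ σ.move (play G ℓ σ (ι ∘ R) t).2 (play G ℓ σ (ι ∘ R) t).1 := by
      rw [ih_cops, ← ih_replay]
      exact retractStrategy_move hT hρ σ _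
    refine ⟨?_, hmove⟩
    rw [play]
    simp only [hmove, List.reverse_append, List.reverse_singleton, List.singleton_append]
    rw [replay, ih_replay, liftObs_obs hρι hρ, liftObs_obs hρι hρ]
    rfl

lemma captures_retractStrategy (hT : T.Connected) (hι : ∀ a b, T.Adj a b → G.Adj (ι a) (ι b))
    (hρι : ∀ w, ρ (ι w) = w) (hρ : ∀ x y, T.dist (ρ x) (ρ y) ≤ G.dist x y)
    {σ : CopStrategy G k} (hσ : ∀ R, RobberWalk G R → Captures G ℓ σ R) {R : ℕ → W}
    (hR : RobberWalk T R) : Captures T ℓ (retractStrategy G T ι ρ ℓ σ) R := by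
  have hιR : RobberWalk G (ι ∘ R) := fun t => (hR t).imp (congrArg ι) (hι _ _)
  obtain ⟨t, i, hcap⟩ := hσ _ hιR
  refine ⟨t, i, ?_⟩
  simp only [(play_retractStrategy hT hρι hρ σ R _).2, Function.comp_apply]
  rcases hcap with h | h
  · exact Or.inl (by rw [h, Function.comp_apply, hρι])
  · exact Or.inr (by rw [h, Function.comp_apply, hρι])

/-- With a cop on every vertex the robber is caught at once, so the infimum is attained. -/
lemma exists_captures_visCopNumber [Fintype V] (G : SimpleGraph V) (ℓ : ℕ∞) :
    ∃ σ : CopStrategy G (visCopNumber G ℓ), ∀ R, RobberWalk G R → Captures G ℓ σ R := by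
  refine Nat.sInf_mem (s := {k | ∃ σ : CopStrategy G k, ∀ R, RobberWalk G R → Captures G ℓ σ R})
    ⟨Fintype.card V, ⟨(Fintype.equivFin V).symm, fun _ p => p, fun _ _ _ => Or.inl rfl⟩,
      fun R _ => ?_⟩
  exact ⟨0, Fintype.equivFin V (R 0), Or.inl ((Fintype.equivFin V).symm_apply_apply (R 0))⟩

theorem visCopNumber_le_of_retraction [Fintype V] (hT : T.Connected)
    (hι : ∀ a b, T.Adj a b → G.Adj (ι a) (ι b)) (hρι : ∀ w, ρ (ι w) = w)
    (hρ : ∀ x y, T.dist (ρ x) (ρ y) ≤ G.dist x y) (ℓ : ℕ∞) :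
    visCopNumber T ℓ ≤ visCopNumber G ℓ := by
  obtain ⟨σ, hσ⟩ := exists_captures_visCopNumber G ℓ
  exact Nat.sInf_le ⟨retractStrategy G T ι ρ ℓ σ, fun _ => captures_retractStrategy hT hι hρι hρ hσ⟩

end CopsRobber

open CopsRobber in
theorem isometric_tree_visCopNumber_le_general {V W : Type*} [Fintype V]
    (G : SimpleGraph V) (T : SimpleGraph W) (hG : G.Connected) (hT : T.IsTree)
    (ι : W → V) (hinj : Function.Injective ι)
    (hsub : ∀ a b : W, T.Adj a b → G.Adj (ι a) (ι b))
    (hiso : ∀ a b : W, T.dist a b = G.dist (ι a) (ι b)) (ℓ : ℕ) :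
    visCopNumber T (ℓ : ℕ∞) ≤ visCopNumber G (ℓ : ℕ∞) := by
  obtain ⟨ρ, hρι, hρ⟩ := hT.exists_retraction hG hinj hiso
  exact visCopNumber_le_of_retraction hT.connected hsub hρι hρ ℓ

open CopsRobber in
/-- If `T` is an isometric subtree of a connected graph `G`, then
`c_ℓ(T) ≤ c_ℓ(G)`. -/
theorem isometric_tree_visCopNumber_le {V W : Type*} [Fintype V] [Fintype W]
    (G : SimpleGraph V) (T : SimpleGraph W) (hG : G.Connected) (hT : T.IsTree)
    (ι : W → V) (hinj : Function.Injective ι)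
    (hsub : ∀ a b : W, T.Adj a b → G.Adj (ι a) (ι b))
    (hiso : ∀ a b : W, T.dist a b = G.dist (ι a) (ι b)) (ℓ : ℕ) :
    visCopNumber T (ℓ : ℕ∞) ≤ visCopNumber G (ℓ : ℕ∞) :=
  isometric_tree_visCopNumber_le_general G T hG hT ι hinj hsub hiso ℓ
end

section
/- For every ℓ ≥ 1 and n ≥ 3, the minimum number of ℓ-visibility cops needed to see the robber on the cycle C_n is 2 if n ≥ 2ℓ+3, and 1 otherwise. -/
/-!
Two cops always see the robber on a cycle: one guards vertex `0`, so the robber can never wrap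
around, while the other sweeps forward one step per round; the robber must stay strictly ahead
of the sweeper, which is impossible for more than `n` rounds. A single cop sees the robber at
once when `n ≤ 2ℓ + 2`, since every vertex is within `ℓ` of vertex `0` or of vertex `1`. When
`n ≥ 2ℓ + 3`, a robber that is never seen gives the single cop no information, so the cop's
trajectory is fixed in advance, and the robber can keep `ℓ + 1` or `ℓ + 2` steps ahead of the
cop both before and after each of the cop's moves.
-/

open Fin.NatCast Fin.IntCast Fin.CommRing

namespace SimpleGraph

variable {n : ℕ}

theorem cycleGraph_adj_add_one (a : Fin (n + 2)) : (cycleGraph (n + 2)).Adj a (a + 1) := by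
  simp [cycleGraph_adj]

theorem cycleGraph_adj_iff {a b : Fin (n + 2)} :
    (cycleGraph (n + 2)).Adj a b ↔ b = a + 1 ∨ b = a - 1 := by
  rw [cycleGraph_adj, sub_eq_iff_eq_add', sub_eq_iff_eq_add', eq_sub_iff_add_eq, eq_comm, or_comm]

theorem cycleGraph_dist_add_natCast_le (a : Fin (n + 2)) (k : ℕ) :
    (cycleGraph (n + 2)).dist a (a + k) ≤ k := by
  induction k with
  | zero => simp
  | succ k ih =>
    calc (cycleGraph (n + 2)).dist a (a + (k + 1 : ℕ))
        ≤ (cycleGraph (n + 2)).dist a (a + k) +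
            (cycleGraph (n + 2)).dist (a + k) (a + k + 1) := by
          rw [Nat.cast_succ, ← add_assoc]; exact cycleGraph_connected.dist_triangle
      _ ≤ k + 1 := by rw [dist_eq_one_iff_adj.2 (cycleGraph_adj_add_one _)]; omega

theorem cycleGraph_dist_le (a b : Fin (n + 2)) :
    (cycleGraph (n + 2)).dist a b ≤ (b - a).val := by
  simpa using cycleGraph_dist_add_natCast_le a (b - a).val

theorem exists_intCast_of_walk_cycleGraph {a b : Fin (n + 2)}
    (w : (cycleGraph (n + 2)).Walk a b) : ∃ z : ℤ, z.natAbs ≤ w.length ∧ b = a + z := by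
  induction w with
  | nil => exact ⟨0, by simp⟩
  | @cons a c b hac w ih =>
    obtain ⟨z, hz, rfl⟩ := ih
    rcases cycleGraph_adj_iff.1 hac with rfl | rfl
    · exact ⟨z + 1, by simp; omega, by push_cast; ring⟩
    · exact ⟨z - 1, by simp; omega, by push_cast; ring⟩

theorem min_le_cycleGraph_dist (a b : Fin (n + 2)) :
    min (b - a).val (a - b).val ≤ (cycleGraph (n + 2)).dist a b := by
  obtain ⟨w, hw⟩ := cycleGraph_connected.exists_walk_length_eq_dist a b
  obtain ⟨z, hz, rfl⟩ := exists_intCast_of_walk_cycleGraph w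
  rw [← hw]
  refine le_trans ?_ hz
  rcases Int.natAbs_eq z with hz | hz <;> rw [hz]
  · refine min_le_of_left_le ?_
    rw [Int.cast_natCast, add_sub_cancel_left, Fin.val_natCast]
    exact Nat.mod_le _ _
  · refine min_le_of_right_le ?_
    rw [Int.cast_neg, Int.cast_natCast, ← sub_eq_add_neg, sub_sub_cancel, Fin.val_natCast]
    exact (Nat.mod_le _ _).trans_eq (by omega)

theorem cycleGraph_dist (a b : Fin (n + 2)) :
    (cycleGraph (n + 2)).dist a b = min (b - a).val (a - b).val :=
  le_antisymm (le_min (cycleGraph_dist_le a b) (dist_comm ▸ cycleGraph_dist_le b a))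
    (min_le_cycleGraph_dist a b)

theorem cycleGraph_dist_add_natCast {a : Fin (n + 2)} {k : ℕ} (hk : k < n + 2) :
    (cycleGraph (n + 2)).dist a (a + k) = min k (n + 2 - k) := by
  rw [cycleGraph_dist, add_sub_cancel_left, sub_add_cancel_left, Fin.val_neg',
    Fin.val_cast_of_lt hk]
  rcases k.eq_zero_or_pos with rfl | hk0
  · simp
  · rw [Nat.mod_eq_of_lt (by omega)]

theorem cycleGraph_dist_eq_natDist (a b : Fin (n + 2)) :
    (cycleGraph (n + 2)).dist a b = min (a.val.dist b.val) (n + 2 - a.val.dist b.val) := by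
  wlog hab : a ≤ b generalizing a b
  · rw [dist_comm, Nat.dist_comm, this b a (le_of_not_ge hab)]
  have hb : b = a + ((b.val - a.val : ℕ) : Fin (n + 2)) := by
    rw [Nat.cast_sub hab, Fin.cast_val_eq_self, Fin.cast_val_eq_self, add_sub_cancel]
  rw [hb, cycleGraph_dist_add_natCast (by omega), ← hb, Nat.dist_eq_sub_of_le hab]

end SimpleGraph

namespace CopsRobber

variable {V : Type*} {G : SimpleGraph V} {ℓ : ℕ∞} {k : ℕ}

def CanSee (G : SimpleGraph V) (ℓ : ℕ∞) (k : ℕ) : Prop :=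
  ∃ σ : CopStrategy G k, ∀ R, RobberWalk G R → Sees G ℓ σ R

theorem visSeeNumber_eq_of_canSee (hk : CanSee G ℓ k) (hlt : ∀ j < k, ¬ CanSee G ℓ j) :
    visSeeNumber G ℓ = k :=
  le_antisymm (Nat.sInf_le hk) (le_csInf ⟨k, hk⟩ fun j hj => not_lt.1 fun h => hlt j h hj)

theorem not_canSee_zero [Nonempty V] : ¬ CanSee G ℓ 0 := by
  rintro ⟨σ, hσ⟩
  obtain ⟨v⟩ := ‹Nonempty V›
  obtain ⟨_, i, -⟩ := hσ (fun _ => v) fun _ => Or.inl rfl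
  exact i.elim0

theorem obs_eq_none_iff {p : Fin k → V} {r : V} :
    obs G ℓ p r = none ↔ ∀ i, ¬ (G.dist (p i) r : ℕ∞) ≤ ℓ := by
  simp [obs]

namespace CopStrategy

def oblivious (init : Fin k → V) (step : Fin k → V → V)
    (hstep : ∀ i v, step i v = v ∨ G.Adj v (step i v)) : CopStrategy G k where
  init := init
  move _ p i := step i (p i)
  valid _ p i := hstep i (p i)

/-- The cops' positions as long as the robber has never been observed. -/
def blindCops (σ : CopStrategy G k) : ℕ → Fin k → V
  | 0 => σ.init
  | t + 1 => σ.move (List.replicate (2 * t + 1) none) (σ.blindCops t)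

theorem blindCops_succ_eq_or_adj (σ : CopStrategy G k) (t : ℕ) (i : Fin k) :
    σ.blindCops (t + 1) i = σ.blindCops t i ∨
      G.Adj (σ.blindCops t i) (σ.blindCops (t + 1) i) :=
  σ.valid _ _ i

end CopStrategy

theorem copsAt_oblivious (init : Fin k → V) (step : Fin k → V → V)
    (hstep : ∀ i v, step i v = v ∨ G.Adj v (step i v)) (R : ℕ → V) (t : ℕ) (i : Fin k) :
    copsAt G ℓ (CopStrategy.oblivious init step hstep) R t i = (step i)^[t] (init i) := by
  induction t with
  | zero => rfl
  | succ t ih =>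
    rw [Function.iterate_succ_apply', ← ih]
    rfl

theorem play_eq_blindCops (σ : CopStrategy G k) (R : ℕ → V)
    (hfar : ∀ t i, ¬ (G.dist (σ.blindCops t i) (R t) : ℕ∞) ≤ ℓ ∧
      ¬ (G.dist (σ.blindCops (t + 1) i) (R t) : ℕ∞) ≤ ℓ) (t : ℕ) :
    play G ℓ σ R t = (σ.blindCops t, List.replicate (2 * t + 1) none) := by
  induction t with
  | zero =>
    simpa [play, CopStrategy.blindCops] using obs_eq_none_iff.2 fun i => (hfar 0 i).1
  | succ t ih =>
    have hmove : σ.move (List.replicate (2 * t + 1) none) (σ.blindCops t) =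
      σ.blindCops (t + 1) := rfl
    simp only [play, ih, hmove, obs_eq_none_iff.2 fun i => (hfar t i).2,
      obs_eq_none_iff.2 fun i => (hfar (t + 1) i).1]
    rw [show 2 * (t + 1) + 1 = 2 * t + 1 + 2 by ring, List.replicate_add (2 * t + 1) 2,
      List.append_assoc]
    rfl

theorem not_sees_of_far_from_blindCops (σ : CopStrategy G k) (R : ℕ → V)
    (hfar : ∀ t i, ¬ (G.dist (σ.blindCops t i) (R t) : ℕ∞) ≤ ℓ ∧
      ¬ (G.dist (σ.blindCops (t + 1) i) (R t) : ℕ∞) ≤ ℓ) :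
    ¬ Sees G ℓ σ R := by
  rintro ⟨t, i, h | h⟩ <;>
    simp only [copsAt, play_eq_blindCops σ R hfar] at h
  exacts [(hfar t i).1 h, (hfar t i).2 h]

section Cycle

open SimpleGraph

variable {n : ℕ}

theorem canSee_one_cycleGraph {ℓ : ℕ} (h : n + 2 ≤ 2 * ℓ + 2) :
    CanSee (cycleGraph (n + 2)) ℓ 1 := by
  refine ⟨.oblivious (fun _ => 0) (fun _ v => v + 1)
    (fun _ v => .inr (cycleGraph_adj_add_one v)), fun R _ => ⟨0, 0, ?_⟩⟩
  simp only [copsAt_oblivious, Function.iterate_zero, id, Function.iterate_one, zero_add,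
    Nat.cast_le, cycleGraph_dist_eq_natDist, Fin.val_zero, Fin.val_one, Nat.dist]
  omega

theorem canSee_two_cycleGraph (ℓ : ℕ) : CanSee (cycleGraph (n + 2)) ℓ 2 := by
  refine ⟨.oblivious (fun _ => 0) ![id, (· + 1)] ?_, fun R hR => ?_⟩
  · simpa [Fin.forall_fin_two] using cycleGraph_adj_add_one
  by_contra hns
  simp only [Sees, not_exists, not_or, copsAt_oblivious, Nat.cast_le, not_le] at hns
  set r : ℕ → ℕ := fun t => (R t).val
  have hsweeper (t : ℕ) : (fun v : Fin (n + 2) => v + 1)^[t] 0 = t := by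
    simp [add_right_iterate]
  have hguard (t : ℕ) : ℓ < min (r t) (n + 2 - r t) := by
    simpa [cycleGraph_dist_eq_natDist, Nat.dist_zero_left] using (hns t 0).1
  have hsweep (t : ℕ) (ht : t + 1 < n + 2) :
      ℓ < min ((t + 1).dist (r t)) (n + 2 - (t + 1).dist (r t)) ∧
      ℓ < min ((t + 1).dist (r (t + 1))) (n + 2 - (t + 1).dist (r (t + 1))) := by
    have h1 := (hns t 1).2
    have h2 := (hns (t + 1) 1).1
    simp only [Matrix.cons_val_one, Matrix.cons_val_fin_one, hsweeper, cycleGraph_dist_eq_natDist,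
      Fin.val_cast_of_lt ht] at h1 h2
    exact ⟨h1, h2⟩
  have hstep (t : ℕ) : min ((r t).dist (r (t + 1))) (n + 2 - (r t).dist (r (t + 1))) ≤ 1 := by
    rw [← cycleGraph_dist_eq_natDist]
    rcases hR t with h | h
    · simp [h]
    · exact (dist_eq_one_iff_adj.2 h).le
  have hahead (t : ℕ) : t + ℓ + 1 ≤ r t := by
    induction t with
    | zero => have := hguard 0; omega
    | succ t ih =>
      have := hguard t; have := hguard (t + 1); have := hstep t; have := hsweep t (by omega)
      simp only [Nat.dist] at *
      omega
  exact absurd (hahead (n + 2)) (by have : r (n + 2) < n + 2 := (R (n + 2)).isLt; omega)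

def cycleWindow (ℓ : ℕ) (c : Fin (n + 2)) : Set (Fin (n + 2)) :=
  {c + ((ℓ + 1 : ℕ) : Fin (n + 2)), c + ((ℓ + 2 : ℕ) : Fin (n + 2))}

theorem lt_dist_of_mem_cycleWindow {ℓ : ℕ} (h : 2 * ℓ + 3 ≤ n + 2) {c r : Fin (n + 2)}
    (hr : r ∈ cycleWindow ℓ c) : ℓ < (cycleGraph (n + 2)).dist c r := by
  rcases hr with rfl | rfl <;> rw [cycleGraph_dist_add_natCast (by omega)] <;> omega

theorem eq_or_adj_of_mem_cycleWindow {ℓ : ℕ} {c r r' : Fin (n + 2)}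
    (hr : r ∈ cycleWindow ℓ c) (hr' : r' ∈ cycleWindow ℓ c) :
    r' = r ∨ (cycleGraph (n + 2)).Adj r r' := by
  have hadj : (cycleGraph (n + 2)).Adj (c + ((ℓ + 1 : ℕ) : Fin (n + 2)))
      (c + ((ℓ + 2 : ℕ) : Fin (n + 2))) := by
    convert cycleGraph_adj_add_one (c + ((ℓ + 1 : ℕ) : Fin (n + 2))) using 1
    push_cast; ring
  rcases hr with rfl | rfl <;> rcases hr' with rfl | rfl
  exacts [.inl rfl, .inr hadj, .inr hadj.symm, .inl rfl]

theorem exists_mem_cycleWindow_inter {ℓ : ℕ} {c c' : Fin (n + 2)}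
    (hc : c' = c ∨ (cycleGraph (n + 2)).Adj c c') :
    ∃ r, r ∈ cycleWindow ℓ c ∧ r ∈ cycleWindow ℓ c' := by
  rcases hc with rfl | hc
  · exact ⟨_, .inl rfl, .inl rfl⟩
  rcases cycleGraph_adj_iff.1 hc with rfl | rfl
  · exact ⟨_, .inr rfl, .inl (show _ = _ by push_cast; ring)⟩
  · exact ⟨_, .inl rfl, .inr (show _ = _ by push_cast; ring)⟩

theorem not_canSee_one_cycleGraph {ℓ : ℕ} (h : 2 * ℓ + 3 ≤ n + 2) :
    ¬ CanSee (cycleGraph (n + 2)) ℓ 1 := by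
  rintro ⟨σ, hσ⟩
  choose R hRt hRt' using fun t =>
    exists_mem_cycleWindow_inter (ℓ := ℓ) (σ.blindCops_succ_eq_or_adj t 0)
  refine not_sees_of_far_from_blindCops σ R (fun t i => ?_) (hσ R fun t => ?_)
  · rw [Subsingleton.elim i 0, Nat.cast_le, Nat.cast_le, not_le, not_le]
    exact ⟨lt_dist_of_mem_cycleWindow h (hRt t), lt_dist_of_mem_cycleWindow h (hRt' t)⟩
  · exact eq_or_adj_of_mem_cycleWindow (hRt' t) (hRt (t + 1))

end Cycle

end CopsRobber

open CopsRobber in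
theorem visSeeNumber_cycle_general (ℓ n : ℕ) (hn : 3 ≤ n) :
    visSeeNumber (SimpleGraph.cycleGraph n) (ℓ : ℕ∞) =
      if 2 * ℓ + 3 ≤ n then 2 else 1 := by
  obtain ⟨m, rfl⟩ : ∃ m, n = m + 2 := ⟨n - 2, by omega⟩
  split_ifs with h
  · refine visSeeNumber_eq_of_canSee (canSee_two_cycleGraph ℓ) fun j hj => ?_
    interval_cases j
    exacts [not_canSee_zero, not_canSee_one_cycleGraph h]
  · refine visSeeNumber_eq_of_canSee (canSee_one_cycleGraph (by omega)) fun j hj => ?_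
    obtain rfl : j = 0 := by omega
    exact not_canSee_zero

open CopsRobber in
/-- For every `ℓ ≥ 1` and `n ≥ 3`, `c'_ℓ(C_n) = 2` if `n ≥ 2ℓ+3`, and
`c'_ℓ(C_n) = 1` otherwise. -/
theorem visSeeNumber_cycle (ℓ n : ℕ) (hℓ : 1 ≤ ℓ) (hn : 3 ≤ n) :
    visSeeNumber (SimpleGraph.cycleGraph n) (ℓ : ℕ∞) =
      if 2 * ℓ + 3 ≤ n then 2 else 1 :=
  visSeeNumber_cycle_general ℓ n hn
end

section
/- For every ℓ ≥ 1 and all 2 ≤ m ≤ n, the ℓ-visibility cop number of the complete bipartite graph K_{m,n} equals 2, while the number of cops needed merely to see the robber equals 1. -/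
/-!
Two cops placed at adjacent vertices `inl a`, `inr b` of `K_{m,n}` dominate it, so with
`ℓ ≥ 1` they see the robber at once and the cop adjacent to him captures him in the first
round; a single cop moving once along that edge comes within distance `1` of every vertex,
so it sees the robber. One cop never captures when both sides have two vertices: the robber
keeps on the cop's side, on another vertex, and whenever the cop crosses to the other side
he crosses too, to a vertex of the cop's new side other than the cop's.
-/

namespace CopsRobber

variable {V : Type*} {G : SimpleGraph V} {ℓ : ℕ∞} {k : ℕ}

theorem coe_dist_le_of_adj {u v : V} (hℓ : 1 ≤ ℓ) (h : G.Adj u v) : (G.dist u v : ℕ∞) ≤ ℓ := by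
  rwa [SimpleGraph.dist_eq_one_iff_adj.2 h, Nat.cast_one]

theorem obs_eq_some {p : Fin k → V} {r : V} (i : Fin k) (h : (G.dist (p i) r : ℕ∞) ≤ ℓ) :
    obs G ℓ p r = some r :=
  if_pos ⟨i, h⟩

theorem copsAt_succ_eq_or_adj (σ : CopStrategy G k) (R : ℕ → V) (t : ℕ) (i : Fin k) :
    copsAt G ℓ σ R (t + 1) i = copsAt G ℓ σ R t i ∨
      G.Adj (copsAt G ℓ σ R t i) (copsAt G ℓ σ R (t + 1) i) :=
  σ.valid _ _ i

theorem robberWalk_const (v : V) : RobberWalk G fun _ => v :=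
  fun _ => Or.inl rfl

theorem visCopNumber_eq (σ : CopStrategy G k) (hσ : ∀ R, RobberWalk G R → Captures G ℓ σ R)
    (hlt : ∀ j < k, ∀ τ : CopStrategy G j, ∃ R, RobberWalk G R ∧ ¬ Captures G ℓ τ R) :
    visCopNumber G ℓ = k :=
  IsLeast.csInf_eq ⟨⟨σ, hσ⟩, fun j ⟨τ, hτ⟩ => not_lt.1 fun hj =>
    let ⟨R, hR, hnot⟩ := hlt j hj τ; hnot (hτ R hR)⟩

theorem visSeeNumber_eq (σ : CopStrategy G k) (hσ : ∀ R, RobberWalk G R → Sees G ℓ σ R)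
    (hlt : ∀ j < k, ∀ τ : CopStrategy G j, ∃ R, RobberWalk G R ∧ ¬ Sees G ℓ τ R) :
    visSeeNumber G ℓ = k :=
  IsLeast.csInf_eq ⟨⟨σ, hσ⟩, fun j ⟨τ, hτ⟩ => not_lt.1 fun hj =>
    let ⟨R, hR, hnot⟩ := hlt j hj τ; hnot (hτ R hR)⟩

theorem exists_robberWalk_not_captures_zero [Nonempty V] (τ : CopStrategy G 0) :
    ∃ R, RobberWalk G R ∧ ¬ Captures G ℓ τ R :=
  ⟨_, robberWalk_const (Classical.arbitrary V), fun ⟨_, i, _⟩ => i.elim0⟩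

theorem exists_robberWalk_not_sees_zero [Nonempty V] (τ : CopStrategy G 0) :
    ∃ R, RobberWalk G R ∧ ¬ Sees G ℓ τ R :=
  ⟨_, robberWalk_const (Classical.arbitrary V), fun ⟨_, i, _⟩ => i.elim0⟩

open Classical in
/-- The cops stay put, except that a cop adjacent to the robber's initial position, as
revealed by the first observation, jumps onto it. -/
noncomputable def CopStrategy.pounce (G : SimpleGraph V) (p : Fin k → V) : CopStrategy G k where
  init := p
  move h q i := match h with
    | some r :: _ => if G.Adj (q i) r then r else q i
    | _ => q i
  valid h q i := by
    rcases h with _ | ⟨_ | r, _⟩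
    · exact Or.inl rfl
    · exact Or.inl rfl
    · dsimp only
      split_ifs with hadj
      exacts [Or.inr hadj, Or.inl rfl]

theorem captures_pounce {p : Fin k → V} (hℓ : 1 ≤ ℓ) (hp : ∀ v, ∃ i, G.Adj (p i) v)
    (R : ℕ → V) : Captures G ℓ (CopStrategy.pounce G p) R := by
  obtain ⟨i, hi⟩ := hp (R 0)
  have hobs : obs G ℓ p (R 0) = some (R 0) := obs_eq_some i (coe_dist_le_of_adj hℓ hi)
  refine ⟨0, i, Or.inr ?_⟩
  change (CopStrategy.pounce G p).move [obs G ℓ p (R 0)] p i = R 0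
  rw [hobs]
  exact if_pos hi

open Classical in
noncomputable def CopStrategy.cross {u w : V} (huw : G.Adj u w) : CopStrategy G 1 where
  init _ := u
  move _ q i := if q i = u then w else q i
  valid _ q i := by
    split_ifs with hq
    · exact Or.inr (hq ▸ huw)
    · exact Or.inl rfl

theorem sees_cross {u w : V} (huw : G.Adj u w)
    (hdom : ∀ v, (G.dist u v : ℕ∞) ≤ ℓ ∨ (G.dist w v : ℕ∞) ≤ ℓ) (R : ℕ → V) :
    Sees G ℓ (CopStrategy.cross huw) R := by
  refine ⟨0, 0, ?_⟩
  have h₁ : copsAt G ℓ (CopStrategy.cross huw) R 1 0 = w := by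
    simp [copsAt, play, CopStrategy.cross]
  rw [h₁]
  exact hdom (R 0)

/-- The play against a robber who starts at `r₀` and, whenever the cops have moved to `p`,
moves from `r` to `ρ p r`. Since his walk depends on the cops' moves, it is built together
with the play. -/
noncomputable def reactivePlay (G : SimpleGraph V) (ℓ : ℕ∞) (σ : CopStrategy G k) (r₀ : V)
    (ρ : (Fin k → V) → V → V) : ℕ → ((Fin k → V) × List (Option V)) × V
  | 0 => ((σ.init, [obs G ℓ σ.init r₀]), r₀)
  | t + 1 =>
    let s := reactivePlay G ℓ σ r₀ ρ t
    let p := σ.move s.1.2 s.1.1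
    let r := ρ p s.2
    ((p, (s.1.2 ++ [obs G ℓ p s.2]) ++ [obs G ℓ p r]), r)

noncomputable def reactiveRobber (G : SimpleGraph V) (ℓ : ℕ∞) (σ : CopStrategy G k) (r₀ : V)
    (ρ : (Fin k → V) → V → V) (t : ℕ) : V :=
  (reactivePlay G ℓ σ r₀ ρ t).2

section reactive

variable (σ : CopStrategy G k) (r₀ : V) (ρ : (Fin k → V) → V → V)

theorem play_reactiveRobber (t : ℕ) :
    play G ℓ σ (reactiveRobber G ℓ σ r₀ ρ) t = (reactivePlay G ℓ σ r₀ ρ t).1 := by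
  induction t with
  | zero => rfl
  | succ t ih => rw [play, ih]; rfl

theorem reactiveRobber_succ (t : ℕ) :
    reactiveRobber G ℓ σ r₀ ρ (t + 1) =
      ρ (copsAt G ℓ σ (reactiveRobber G ℓ σ r₀ ρ) (t + 1)) (reactiveRobber G ℓ σ r₀ ρ t) := by
  rw [copsAt, play_reactiveRobber]
  rfl

end reactive

/-- The robber stays outside the cop's closed neighbourhood; `hf` lets him restore this after
every move of the cop. -/
theorem exists_robberWalk_not_captures_one [Nontrivial V] (σ : CopStrategy G 1) (f : V → V → V)
    (hf : ∀ c r, c ≠ r → (f c r = r ∨ G.Adj r (f c r)) ∧ f c r ≠ c ∧ ¬ G.Adj c (f c r)) :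
    ∃ R, RobberWalk G R ∧ ¬ Captures G ℓ σ R := by
  obtain ⟨r, hr⟩ := exists_ne (σ.init 0)
  set R := reactiveRobber G ℓ σ (f (σ.init 0) r) fun p => f (p 0)
  set c := fun t => copsAt G ℓ σ R t 0
  have hR : ∀ t, R (t + 1) = f (c (t + 1)) (R t) := reactiveRobber_succ σ _ _
  have miss : ∀ t, c t ≠ R t → ¬ G.Adj (c t) (R t) → c (t + 1) ≠ R t := by
    intro t hne hnadj heq
    rcases copsAt_succ_eq_or_adj (ℓ := ℓ) σ R t 0 with h | h
    · exact hne (h.symm.trans heq)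
    · exact hnadj (heq ▸ h)
  have safe : ∀ t, c t ≠ R t ∧ ¬ G.Adj (c t) (R t) := by
    intro t
    induction t with
    | zero => exact (hf _ _ hr.symm).2.imp Ne.symm id
    | succ t ih =>
      rw [hR]
      exact (hf _ _ (miss t ih.1 ih.2)).2.imp Ne.symm id
  refine ⟨R, fun t => ?_, ?_⟩
  · rw [hR]
    exact (hf _ _ (miss t (safe t).1 (safe t).2)).1
  · rintro ⟨t, i, h | h⟩ <;> obtain rfl := Subsingleton.elim i 0
    · exact (safe t).1 h
    · exact miss t (safe t).1 (safe t).2 h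

section completeBipartite

variable {α β : Type*}

theorem visSeeNumber_completeBipartiteGraph [Nonempty α] [Nonempty β] (hℓ : 1 ≤ ℓ) :
    visSeeNumber (completeBipartiteGraph α β) ℓ = 1 := by
  obtain ⟨a⟩ : Nonempty α := inferInstance
  obtain ⟨b⟩ : Nonempty β := inferInstance
  have hab : (completeBipartiteGraph α β).Adj (.inl a) (.inr b) := by simp
  refine visSeeNumber_eq (CopStrategy.cross hab) (fun R _ => sees_cross hab ?_ R) ?_
  · rintro (a' | b')
    · exact Or.inr (coe_dist_le_of_adj hℓ (by simp))
    · exact Or.inl (coe_dist_le_of_adj hℓ (by simp))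
  · intro j hj τ
    obtain rfl : j = 0 := by omega
    exact exists_robberWalk_not_sees_zero τ

variable [Nontrivial α] [Nontrivial β]

noncomputable def sibling : α ⊕ β → α ⊕ β :=
  Sum.map (fun a => (exists_ne a).choose) fun b => (exists_ne b).choose

theorem sibling_ne (v : α ⊕ β) : sibling v ≠ v := by
  cases v with
  | inl a => simpa [sibling] using (exists_ne a).choose_spec
  | inr b => simpa [sibling] using (exists_ne b).choose_spec

theorem completeBipartiteGraph_adj_sibling_iff {u v : α ⊕ β} :
    (completeBipartiteGraph α β).Adj u (sibling v) ↔ (completeBipartiteGraph α β).Adj u v := by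
  cases u <;> cases v <;> simp [sibling]

theorem exists_robberWalk_not_captures_one_completeBipartiteGraph
    (σ : CopStrategy (completeBipartiteGraph α β) 1) :
    ∃ R, RobberWalk (completeBipartiteGraph α β) R ∧
      ¬ Captures (completeBipartiteGraph α β) ℓ σ R := by
  classical
  have : Nontrivial (α ⊕ β) :=
    nontrivial_of_ne (.inl (Classical.arbitrary α)) (.inr (Classical.arbitrary β)) Sum.inl_ne_inr
  refine exists_robberWalk_not_captures_one σ
    (fun c r => if (completeBipartiteGraph α β).Adj c r then sibling c else r) ?_
  intro c r hcr
  split_ifs with hadj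
  · exact ⟨Or.inr (completeBipartiteGraph_adj_sibling_iff.2 hadj.symm), sibling_ne c,
      fun h => (completeBipartiteGraph α β).irrefl (completeBipartiteGraph_adj_sibling_iff.1 h)⟩
  · exact ⟨Or.inl rfl, hcr.symm, hadj⟩

theorem visCopNumber_completeBipartiteGraph (hℓ : 1 ≤ ℓ) :
    visCopNumber (completeBipartiteGraph α β) ℓ = 2 := by
  obtain ⟨a⟩ : Nonempty α := inferInstance
  obtain ⟨b⟩ : Nonempty β := inferInstance
  refine visCopNumber_eq (CopStrategy.pounce _ ![.inl a, .inr b])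
    (fun R _ => captures_pounce hℓ ?_ R) ?_
  · rintro (a' | b')
    · exact ⟨1, by simp⟩
    · exact ⟨0, by simp⟩
  · intro j hj τ
    rcases j with _ | _ | j
    · exact exists_robberWalk_not_captures_zero τ
    · exact exists_robberWalk_not_captures_one_completeBipartiteGraph τ
    · omega

end completeBipartite
end CopsRobber

open CopsRobber in
/-- For `ℓ ≥ 1` and `2 ≤ m ≤ n`, `c_ℓ(K_{m,n}) = 2` and `c'_ℓ(K_{m,n}) = 1`. -/
theorem visCopNumber_completeBipartite (ℓ m n : ℕ) (hℓ : 1 ≤ ℓ) (hm : 2 ≤ m) (hmn : m ≤ n) :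
    visCopNumber (completeBipartiteGraph (Fin m) (Fin n)) (ℓ : ℕ∞) = 2 ∧
    visSeeNumber (completeBipartiteGraph (Fin m) (Fin n)) (ℓ : ℕ∞) = 1 := by
  have : Nontrivial (Fin m) := Fin.nontrivial_iff_two_le.2 hm
  have : Nontrivial (Fin n) := Fin.nontrivial_iff_two_le.2 (hm.trans hmn)
  have hℓ' : (1 : ℕ∞) ≤ ℓ := by exact_mod_cast hℓ
  exact ⟨visCopNumber_completeBipartiteGraph hℓ', visSeeNumber_completeBipartiteGraph hℓ'⟩
end
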